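/- arXiv:2106.06808 — 4 statements merged into one kernel-verified Lean document; each statement's English description precedes it below -/
import Mathlib

section
/- Let κ ∈ (0,1) and let U be an odd zero-up ground state for parameter κ, and set N := U(π/2). Then ∫₀^{π/2} (2 − N²(1 + sin²θ))^{−1/2} dθ = π / (2√2 κ). -/
open Real MeasureTheory Set

noncomputable section

/-- An odd zero-up ground state for parameter `κ`: a `2π`-periodic, odd, twice
continuously differentiable function `U : ℝ → ℝ` satisfying
`κ² U'' + U − U³ = 0` on `ℝ`, with `U' > 0` on `[0, π/2)` and `U' < 0` on `(π/2, π]`. -/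
def IsOddZeroUpGroundState (κ : ℝ) (U : ℝ → ℝ) : Prop :=
  ContDiff ℝ 2 U ∧
  Function.Periodic U (2 * π) ∧
  (∀ x : ℝ, U (-x) = - U x) ∧
  (∀ x : ℝ, κ ^ 2 * deriv (deriv U) x + U x - U x ^ 3 = 0) ∧
  (∀ x ∈ Set.Ico (0 : ℝ) (π / 2), 0 < deriv U x) ∧
  (∀ x ∈ Set.Ioc (π / 2) π, deriv U x < 0)

/-- The Allen–Cahn energy with diffusion coefficient `κ`. -/
def energy (κ : ℝ) (u : ℝ → ℝ) : ℝ :=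
  ∫ x in (-π)..π, (κ ^ 2 / 2 * (deriv u x) ^ 2 + (1 - u x ^ 2) ^ 2 / 4)

/-- The `L²` norm over one period `(-π, π)`. -/
def L2norm (f : ℝ → ℝ) : ℝ := Real.sqrt (∫ x in (-π)..π, (f x) ^ 2)

/-- The `H¹` norm over one period `(-π, π)`. -/
def H1norm (f : ℝ → ℝ) : ℝ := Real.sqrt (L2norm f ^ 2 + L2norm (deriv f) ^ 2)

/-!
Multiplying the equation by `U'` gives the first integral
`κ² U'² = (N² - U²) (2 - N² - U²) / 2`, normalised by `U'(π/2) = 0`. It forces `N < 1`: for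
`N > 1`, `U` would pass through `√(2 - N²) < N` on `[0, π/2)`, where `U'` vanishes; for `N = 1`,
`U` would solve `U' = (1 - U²) / (√2 κ)` and reach its equilibrium `1` in finite time, which
uniqueness for Lipschitz ODEs rules out. On `[0, π/2]` the substitution `θ = arcsin (U / N)`
has `dθ/dx = √(2 - N² - U²) / (√2 κ)`, while the integrand becomes `1 / √(2 - N² - U²)`, so the
integral is `(π/2) / (√2 κ)`.
-/

theorem eqOn_const_of_hasDerivWithinAt_of_eq_zero {v u : ℝ → ℝ} {a b p : ℝ}
    (hv : ContDiff ℝ 1 v) (hvp : v p = 0) (hu : ContinuousOn u (Icc a b))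
    (hu' : ∀ t ∈ Ioc a b, HasDerivWithinAt u (v (u t)) (Iic t) t) (hb : u b = p) :
    EqOn u (fun _ ↦ p) (Icc a b) := by
  obtain ⟨K, hK⟩ := (hv.locallyLipschitz.locallyLipschitzOn (s := u '' Icc a b))
    |>.exists_lipschitzOnWith_of_compact (isCompact_Icc.image_of_continuousOn hu)
  refine ODE_solution_unique_of_mem_Icc_left (v := fun _ ↦ v) (fun _ _ ↦ hK) hu hu'
    (fun t ht ↦ mem_image_of_mem u (Ioc_subset_Icc_self ht)) continuousOn_const
    (fun t _ ↦ by simpa [hvp] using hasDerivWithinAt_const t (Iic t) p) (fun t ht ↦ ?_) hb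
  exact ⟨b, ⟨ht.1.le.trans ht.2, le_rfl⟩, hb⟩

section AllenCahn

variable {κ : ℝ} {U : ℝ → ℝ}

theorem hasDerivAt_allenCahn_firstIntegral (hU : ContDiff ℝ 2 U)
    (hode : ∀ x, κ ^ 2 * deriv (deriv U) x + U x - U x ^ 3 = 0) (x : ℝ) :
    HasDerivAt (fun y ↦ κ ^ 2 / 2 * deriv U y ^ 2 + U y ^ 2 / 2 - U y ^ 4 / 4) 0 x := by
  have hU₁ := (hU.differentiable (by norm_num) x).hasDerivAt
  have hU₂ := (hU.differentiable_deriv_two x).hasDerivAt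
  refine ((((hU₂.pow 2).const_mul (κ ^ 2 / 2)).add ((hU₁.pow 2).div_const 2)).sub
    ((hU₁.pow 4).div_const 4)).congr_deriv ?_
  push_cast
  linear_combination deriv U x * hode x

theorem sq_mul_sq_deriv_eq_of_deriv_eq_zero (hU : ContDiff ℝ 2 U)
    (hode : ∀ x, κ ^ 2 * deriv (deriv U) x + U x - U x ^ 3 = 0) {a : ℝ} (ha : deriv U a = 0)
    (x : ℝ) : κ ^ 2 * deriv U x ^ 2 = (U a ^ 2 - U x ^ 2) * (2 - U a ^ 2 - U x ^ 2) / 2 := by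
  have hE := hasDerivAt_allenCahn_firstIntegral hU hode
  have := is_const_of_deriv_eq_zero (fun y ↦ (hE y).differentiableAt) (fun y ↦ (hE y).deriv) x a
  simp only [ha] at this
  linear_combination 2 * this

end AllenCahn

namespace IsOddZeroUpGroundState

variable {κ : ℝ} {U : ℝ → ℝ} (hU : IsOddZeroUpGroundState κ U)
include hU

theorem differentiable : Differentiable ℝ U := hU.1.differentiable (by norm_num)

theorem continuous : Continuous U := hU.1.continuous

theorem deriv_pos {x : ℝ} (hx : x ∈ Ico 0 (π / 2)) : 0 < deriv U x := hU.2.2.2.2.1 x hx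

theorem map_zero : U 0 = 0 := by
  have := hU.2.2.1 0
  rw [neg_zero] at this
  linarith

theorem strictMonoOn : StrictMonoOn U (Icc 0 (π / 2)) :=
  strictMonoOn_of_deriv_pos (convex_Icc _ _) hU.continuous.continuousOn fun x hx ↦
    hU.deriv_pos (Ioo_subset_Ico_self (by rwa [interior_Icc] at hx))

theorem strictAntiOn : StrictAntiOn U (Icc (π / 2) π) :=
  strictAntiOn_of_deriv_neg (convex_Icc _ _) hU.continuous.continuousOn fun x hx ↦
    hU.2.2.2.2.2 x (Ioo_subset_Ioc_self (by rwa [interior_Icc] at hx))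

theorem deriv_pi_div_two : deriv U (π / 2) = 0 := by
  refine IsLocalMax.deriv_eq_zero ?_
  have hπ : π / 2 < π := by linarith [pi_pos]
  filter_upwards [Ioo_mem_nhds (half_pos pi_pos) hπ] with x hx
  rcases le_total x (π / 2) with h | h
  · exact hU.strictMonoOn.monotoneOn ⟨hx.1.le, h⟩ ⟨(half_pos pi_pos).le, le_rfl⟩ h
  · exact hU.strictAntiOn.antitoneOn ⟨le_rfl, hπ.le⟩ ⟨h, hx.2.le⟩ h

theorem sq_mul_sq_deriv (x : ℝ) :
    κ ^ 2 * deriv U x ^ 2 = (U (π / 2) ^ 2 - U x ^ 2) * (2 - U (π / 2) ^ 2 - U x ^ 2) / 2 :=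
  sq_mul_sq_deriv_eq_of_deriv_eq_zero hU.1 hU.2.2.2.1 hU.deriv_pi_div_two x

theorem mem_Icc_of_mem_Icc {x : ℝ} (hx : x ∈ Icc 0 (π / 2)) : U x ∈ Icc 0 (U (π / 2)) := by
  have hπ : π / 2 ∈ Icc 0 (π / 2) := ⟨(half_pos pi_pos).le, le_rfl⟩
  refine ⟨hU.map_zero ▸ hU.strictMonoOn.monotoneOn ⟨le_rfl, hπ.1⟩ hx hx.1,
    hU.strictMonoOn.monotoneOn hx hπ hx.2⟩

theorem pos_pi_div_two : 0 < U (π / 2) :=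
  hU.map_zero ▸ hU.strictMonoOn ⟨le_rfl, (half_pos pi_pos).le⟩
    ⟨(half_pos pi_pos).le, le_rfl⟩ (half_pos pi_pos)

theorem not_one_lt (hκ : κ ≠ 0) : ¬ 1 < U (π / 2) := by
  intro hN
  have hd₀ := hU.deriv_pos ⟨le_rfl, half_pos pi_pos⟩
  have hN2 : U (π / 2) ^ 2 < 2 := by
    have h := hU.sq_mul_sq_deriv 0
    rw [hU.map_zero] at h
    nlinarith [mul_pos (pow_pos (abs_pos.2 hκ) 2) (pow_pos hd₀ 2), sq_abs κ]
  have hmem : √(2 - U (π / 2) ^ 2) ∈ Ico (U 0) (U (π / 2)) := by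
    refine ⟨hU.map_zero.symm ▸ sqrt_nonneg _, ?_⟩
    rw [sqrt_lt' (by linarith)]
    nlinarith
  obtain ⟨x, hx, hUx⟩ :=
    intermediate_value_Ico (half_pos pi_pos).le hU.continuous.continuousOn hmem
  have h := hU.sq_mul_sq_deriv x
  rw [hUx, sq_sqrt (by linarith)] at h
  have := mul_pos (pow_pos (abs_pos.2 hκ) 2) (pow_pos (hU.deriv_pos hx) 2)
  nlinarith [sq_abs κ]

theorem ne_one (hκ : 0 < κ) : U (π / 2) ≠ 1 := by
  intro hN
  have hode : ∀ t ∈ Ioc 0 (π / 2),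
      HasDerivWithinAt U ((1 - U t ^ 2) / (√2 * κ)) (Iic t) t := by
    intro t ht
    have hmem := hU.mem_Icc_of_mem_Icc (Ioc_subset_Icc_self ht)
    rw [hN] at hmem
    have hd : 0 ≤ deriv U t := by
      rcases ht.2.lt_or_eq with h | h
      · exact (hU.deriv_pos ⟨ht.1.le, h⟩).le
      · rw [h, hU.deriv_pi_div_two]
    have h := hU.sq_mul_sq_deriv t
    rw [hN] at h
    have hderiv : deriv U t = (1 - U t ^ 2) / (√2 * κ) := by
      rw [eq_div_iff (by positivity)]
      refine (pow_left_inj₀ (by positivity) (by nlinarith [hmem.1, hmem.2]) two_ne_zero).1 ?_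
      linear_combination 2 * h + (κ * deriv U t) ^ 2 * sq_sqrt (zero_le_two : (0 : ℝ) ≤ 2)
    exact hderiv ▸ (hU.differentiable t).hasDerivAt.hasDerivWithinAt
  have h := eqOn_const_of_hasDerivWithinAt_of_eq_zero (v := fun u ↦ (1 - u ^ 2) / (√2 * κ))
    (by fun_prop) (by simp) hU.continuous.continuousOn hode hN ⟨le_rfl, (half_pos pi_pos).le⟩
  simp [hU.map_zero] at h

theorem lt_one (hκ : 0 < κ) : U (π / 2) < 1 :=
  (not_lt.1 (hU.not_one_lt hκ.ne')).lt_of_ne (hU.ne_one hκ)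

theorem hasDerivAt_arcsin_div (hκ : 0 < κ) {x : ℝ} (hx : x ∈ Ioo 0 (π / 2)) :
    HasDerivAt (fun y ↦ arcsin (U y / U (π / 2)))
      (√(2 - U (π / 2) ^ 2 - U x ^ 2) / (√2 * κ)) x := by
  set N := U (π / 2)
  have hN : 0 < N := hU.pos_pi_div_two
  have hπ : π / 2 ∈ Icc 0 (π / 2) := ⟨(half_pos pi_pos).le, le_rfl⟩
  have hUx : 0 < U x :=
    hU.map_zero ▸ hU.strictMonoOn ⟨le_rfl, hπ.1⟩ (Ioo_subset_Icc_self hx) hx.1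
  have hUxN : U x < N := hU.strictMonoOn (Ioo_subset_Icc_self hx) hπ hx.2
  have hd := hU.deriv_pos (Ioo_subset_Ico_self hx)
  have hA : 0 < N ^ 2 - U x ^ 2 := by nlinarith
  have hAB : √(N ^ 2 - U x ^ 2) * √(2 - N ^ 2 - U x ^ 2) = √2 * κ * deriv U x := by
    rw [← sqrt_mul hA.le, ← sqrt_sq (by positivity : 0 ≤ √2 * κ * deriv U x)]
    congr 1
    linear_combination -2 * hU.sq_mul_sq_deriv x
      - (κ * deriv U x) ^ 2 * sq_sqrt (zero_le_two : (0 : ℝ) ≤ 2)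
  have hsqrt : √(1 - (U x / N) ^ 2) = √(N ^ 2 - U x ^ 2) / N := by
    rw [← sqrt_sq hN.le, ← sqrt_div' _ (sq_nonneg N), sqrt_sq hN.le]
    congr 1
    field_simp
  have hpos : 0 < U x / N := div_pos hUx hN
  have hlt : U x / N < 1 := (div_lt_one hN).2 hUxN
  refine ((hasDerivAt_arcsin (by linarith) hlt.ne).comp x
    ((hU.differentiable x).hasDerivAt.div_const N)).congr_deriv ?_
  rw [hsqrt]
  field_simp
  linear_combination -hAB

theorem one_div_sqrt_sin_arcsin_div_mul (hκ : 0 < κ) {x : ℝ} (hx : x ∈ Icc 0 (π / 2)) :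
    1 / √(2 - U (π / 2) ^ 2 * (1 + sin (arcsin (U x / U (π / 2))) ^ 2))
      * (√(2 - U (π / 2) ^ 2 - U x ^ 2) / (√2 * κ)) = 1 / (√2 * κ) := by
  set N := U (π / 2)
  have hN : 0 < N := hU.pos_pi_div_two
  have hN1 : N < 1 := hU.lt_one hκ
  have hUx := hU.mem_Icc_of_mem_Icc hx
  rw [sin_arcsin (by linarith [div_nonneg hUx.1 hN.le]) ((div_le_one hN).2 hUx.2)]
  have hB : 2 - N ^ 2 * (1 + (U x / N) ^ 2) = 2 - N ^ 2 - U x ^ 2 := by field_simp; ring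
  have hBpos : 0 < √(2 - N ^ 2 - U x ^ 2) := sqrt_pos.2 (by nlinarith [hUx.1, hUx.2])
  rw [hB]
  field_simp

end IsOddZeroUpGroundState

theorem ground_state_integral_identity_general (κ : ℝ) (hκ : 0 < κ)
    (U : ℝ → ℝ) (hU : IsOddZeroUpGroundState κ U) :
    ∫ θ in (0 : ℝ)..(π / 2),
        1 / Real.sqrt (2 - (U (π / 2)) ^ 2 * (1 + Real.sin θ ^ 2))
      = π / (2 * Real.sqrt 2 * κ) := by
  set N := U (π / 2)
  have hN : 0 < N := hU.pos_pi_div_two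
  have hN1 : N < 1 := hU.lt_one hκ
  have hUc := hU.continuous
  have hg : ∀ θ, √(2 - N ^ 2 * (1 + sin θ ^ 2)) ≠ 0 := fun θ ↦
    (sqrt_pos.2 (by nlinarith [sin_sq_le_one θ, sq_nonneg (sin θ)])).ne'
  have hπ : (0 : ℝ) ≤ π / 2 := (half_pos pi_pos).le
  have hsubst := intervalIntegral.integral_comp_mul_deriv'' (a := 0) (b := π / 2)
    (f := fun y ↦ arcsin (U y / N)) (f' := fun x ↦ √(2 - N ^ 2 - U x ^ 2) / (√2 * κ))
    (g := fun θ ↦ 1 / √(2 - N ^ 2 * (1 + sin θ ^ 2))) (by fun_prop)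
    (fun x hx ↦ (hU.hasDerivAt_arcsin_div hκ (by simpa [hπ] using hx)).hasDerivWithinAt)
    (by fun_prop) (Continuous.continuousOn (by fun_prop (disch := exact hg)))
  rw [hU.map_zero, zero_div, arcsin_zero, div_self hN.ne', arcsin_one] at hsubst
  calc _ = ∫ _ in (0 : ℝ)..π / 2, 1 / (√2 * κ) := hsubst.symm.trans <|
        intervalIntegral.integral_congr fun x hx ↦
          hU.one_div_sqrt_sin_arcsin_div_mul hκ (uIcc_of_le hπ ▸ hx)
    _ = π / (2 * √2 * κ) := by
      rw [intervalIntegral.integral_const, smul_eq_mul, sub_zero]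
      field_simp

/-- `∫₀^{π/2} (2 − N²(1+sin²θ))^{−1/2} dθ = π/(2√2 κ)` with `N = U(π/2)`. -/
theorem ground_state_integral_identity (κ : ℝ) (hκ : 0 < κ) (hκ1 : κ < 1)
    (U : ℝ → ℝ) (hU : IsOddZeroUpGroundState κ U) :
    ∫ θ in (0 : ℝ)..(π / 2),
        1 / Real.sqrt (2 - (U (π / 2)) ^ 2 * (1 + Real.sin θ ^ 2))
      = π / (2 * Real.sqrt 2 * κ) :=
  ground_state_integral_identity_general κ hκ U hU
end
end

section
/- The function g : [0,1) → ℝ defined by g(N) = ∫₀^{π/2} (2 − N²(1 + sin²θ))^{−1/2} dθ tends to +∞ as N → 1⁻; that is, for every M > 0 there exists δ ∈ (0,1) such that g(N) > M whenever 1 − δ < N < 1. -/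
/-!
Write `ε = √(2(1 - N²))`. Since `2 - N²(1 + sin²θ) = ε² + N² cos²θ` and `cos θ ≤ π/2 - θ` on
`[0, π/2]`, the integrand is at least `1 / (ε + (π/2 - θ))`, whose integral is
`log (ε + π/2) - log ε`. As `N → 1⁻` we have `ε → 0⁺`, so this lower bound tends to `+∞`.
-/

open Real MeasureTheory Set

noncomputable section

open Filter Topology

def gIntegral (N : ℝ) : ℝ :=
  ∫ θ in (0 : ℝ)..(π / 2), 1 / √(2 - N ^ 2 * (1 + sin θ ^ 2))

theorem integral_one_div_add_sub {ε a : ℝ} (hε : 0 < ε) (ha : 0 ≤ a) :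
    ∫ θ in (0 : ℝ)..a, 1 / (ε + (a - θ)) = log (ε + a) - log ε := by
  rw [intervalIntegral.integral_comp_sub_left (fun x => 1 / (ε + x)) a,
    intervalIntegral.integral_comp_add_left (fun x => 1 / x) ε, sub_self, sub_zero, add_zero,
    integral_one_div_of_pos hε (by linarith), log_div (by linarith) hε.ne']

theorem cos_le_pi_div_two_sub {θ : ℝ} (hθ : θ ≤ π / 2) : cos θ ≤ π / 2 - θ := by
  simpa only [sin_pi_div_two_sub] using sin_le (sub_nonneg.mpr hθ)

theorem two_sub_sq_mul_one_add_sin_sq_pos {N : ℝ} (hN : N ^ 2 < 1) (θ : ℝ) :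
    0 < 2 - N ^ 2 * (1 + sin θ ^ 2) := by
  nlinarith [sin_sq_le_one θ]

theorem sqrt_two_sub_sq_mul_one_add_sin_sq_le {N θ : ℝ} (hN : N ^ 2 ≤ 1)
    (hθ : θ ∈ Icc 0 (π / 2)) :
    √(2 - N ^ 2 * (1 + sin θ ^ 2)) ≤ √(2 * (1 - N ^ 2)) + (π / 2 - θ) := by
  set ε := √(2 * (1 - N ^ 2))
  have hε : ε ^ 2 = 2 * (1 - N ^ 2) := sq_sqrt (by linarith)
  have hcos : 0 ≤ cos θ :=
    cos_nonneg_of_mem_Icc ⟨by linarith [pi_pos, hθ.1], hθ.2⟩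
  have hsquare : 2 - N ^ 2 * (1 + sin θ ^ 2) ≤ (ε + cos θ) ^ 2 := by
    nlinarith [sin_sq_add_cos_sq θ, mul_nonneg (sqrt_nonneg (2 * (1 - N ^ 2))) hcos,
      mul_nonneg (sub_nonneg.mpr hN) (sq_nonneg (cos θ))]
  calc √(2 - N ^ 2 * (1 + sin θ ^ 2)) ≤ ε + cos θ :=
        sqrt_le_iff.mpr ⟨by positivity, hsquare⟩
    _ ≤ ε + (π / 2 - θ) := by gcongr; exact cos_le_pi_div_two_sub hθ.2

theorem log_sub_log_le_gIntegral {N : ℝ} (hN : N ^ 2 < 1) :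
    log (√(2 * (1 - N ^ 2)) + π / 2) - log √(2 * (1 - N ^ 2)) ≤ gIntegral N := by
  set ε := √(2 * (1 - N ^ 2))
  have hε : 0 < ε := sqrt_pos.mpr (by linarith)
  have hπ : 0 ≤ π / 2 := by positivity
  rw [← integral_one_div_add_sub hε hπ]
  refine intervalIntegral.integral_mono_on hπ ?_ ?_ fun θ hθ => ?_
  · refine ContinuousOn.intervalIntegrable (continuousOn_const.div (by fun_prop) fun θ hθ => ?_)
    rw [uIcc_of_le hπ] at hθ
    linarith [hθ.2]
  · refine ContinuousOn.intervalIntegrable (continuousOn_const.div (by fun_prop) fun θ _ => ?_)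
    exact (sqrt_pos.mpr (two_sub_sq_mul_one_add_sin_sq_pos hN θ)).ne'
  · exact one_div_le_one_div_of_le (sqrt_pos.mpr (two_sub_sq_mul_one_add_sin_sq_pos hN θ))
      (sqrt_two_sub_sq_mul_one_add_sin_sq_le hN.le hθ)

theorem tendsto_sqrt_two_mul_one_sub_sq_nhdsLT_one :
    Tendsto (fun N : ℝ => √(2 * (1 - N ^ 2))) (𝓝[<] 1) (𝓝[>] 0) := by
  have hsq_lt_one : ∀ᶠ N in 𝓝[<] (1 : ℝ), N ^ 2 < 1 :=
    eventually_of_mem (Ioo_mem_nhdsLT (by norm_num : (0 : ℝ) < 1)) fun N hN => by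
      nlinarith [hN.1, hN.2]
  refine tendsto_nhdsWithin_iff.mpr ⟨?_, hsq_lt_one.mono fun N hN => sqrt_pos.mpr (by linarith)⟩
  exact ((by fun_prop : Continuous fun N : ℝ => √(2 * (1 - N ^ 2))).tendsto' 1 0
    (by norm_num)).mono_left nhdsWithin_le_nhds

theorem tendsto_gIntegral_nhdsLT_one : Tendsto gIntegral (𝓝[<] 1) atTop := by
  have hlog : Tendsto (fun ε => log (ε + π / 2) - log ε) (𝓝[>] 0) atTop := by
    have hfirst : Tendsto (fun ε => log (ε + π / 2)) (𝓝[>] 0) (𝓝 (log (0 + π / 2))) :=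
      ((continuousAt_id.add continuousAt_const).log (by simp [pi_ne_zero])).tendsto.mono_left
        nhdsWithin_le_nhds
    simpa only [sub_eq_add_neg, Function.comp_def] using
      hfirst.add_atTop (tendsto_neg_atBot_atTop.comp tendsto_log_nhdsGT_zero)
  refine tendsto_atTop_mono' _ ?_ (hlog.comp tendsto_sqrt_two_mul_one_sub_sq_nhdsLT_one)
  filter_upwards [Ioo_mem_nhdsLT (by norm_num : (-1 : ℝ) < 1)] with N hN
  exact log_sub_log_le_gIntegral (by nlinarith [hN.1, hN.2])

/-- `g(N) = ∫₀^{π/2} (2 − N²(1+sin²θ))^{−1/2} dθ → +∞` as `N → 1⁻`. -/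
theorem g_tendsto_top :
    ∀ M : ℝ, 0 < M → ∃ δ : ℝ, 0 < δ ∧ δ < 1 ∧
      ∀ N : ℝ, 1 - δ < N → N < 1 →
        (∫ θ in (0 : ℝ)..(π / 2), 1 / Real.sqrt (2 - N ^ 2 * (1 + Real.sin θ ^ 2))) > M := by
  intro M _
  obtain ⟨l, hl, hsub⟩ := mem_nhdsLT_iff_exists_Ioo_subset.mp
    (tendsto_gIntegral_nhdsLT_one.eventually_gt_atTop M)
  refine ⟨min (1 - l) (1 / 2), lt_min (sub_pos.mpr hl) (by norm_num),
    (min_le_right _ _).trans_lt (by norm_num), fun N hN hN1 => hsub ⟨?_, hN1⟩⟩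
  linarith [min_le_left (1 - l) (1 / 2)]
end
end

section
/- Let κ ∈ (0,1) and let m_κ be the unique positive integer with 1/(m_κ + 1) ≤ κ < 1/m_κ. Let u : ℝ → ℝ be a bounded, twice continuously differentiable, 2π-periodic solution of κ² u'' + u − u³ = 0 on ℝ. Then exactly one of the following holds: (1) u ≡ 1, u ≡ −1, or u ≡ 0; (2) there exist an integer j with 1 ≤ j ≤ m_κ, a constant c ∈ ℝ, and a sign σ ∈ {1, −1} such that the function w(y) := σ · u((y − c)/j) is an odd zero-up ground state for parameter jκ (note 0 < jκ < 1). -/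
open Real MeasureTheory Set

noncomputable section

/-!
A nonconstant periodic solution `u` has a zero, since the second-derivative test gives
`u³ ≤ u` at a maximum and `u ≤ u³` at a minimum. By uniqueness for the initial value problem,
`u` is odd about each zero and even about each critical point; the zero is simple, so after a
translation and a sign change `u 0 = 0 < u' 0`. If `s` is the first critical point after `0`,
the two reflections make `u` antiperiodic with antiperiod `2s` and strictly increasing on
`[-s, s]`. The value `u s` is then attained once per period `4s`, so `2π = 4ns`, and
`y ↦ u (y / n)` is an odd zero-up ground state for `nκ`. Finally the Wronskian of `u` and
`sin (x / κ)` on the positive hump `(0, 2s)` (Sturm comparison) gives `πκ < 2s`, i.e. `nκ < 1`.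
-/

open Function Filter Topology

theorem ODE_solution_unique_univ_of_locallyLipschitz {E : Type*} [NormedAddCommGroup E]
    [NormedSpace ℝ E] {F : E → E} (hF : LocallyLipschitz F) {f g : ℝ → E}
    (hf : ∀ t, HasDerivAt f (F (f t)) t) (hg : ∀ t, HasDerivAt g (F (g t)) t) {t₀ : ℝ}
    (heq : f t₀ = g t₀) : f = g := by
  have hfc : Continuous f := continuous_iff_continuousAt.2 fun t => (hf t).continuousAt
  have hgc : Continuous g := continuous_iff_continuousAt.2 fun t => (hg t).continuousAt
  have hopen : IsOpen {t | f t = g t} := by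
    refine isOpen_iff_mem_nhds.2 fun t (ht : f t = g t) => ?_
    obtain ⟨K, U, hU, hK⟩ := hF (f t)
    have hfU : ∀ᶠ t' in 𝓝 t, f t' ∈ U := hfc.continuousAt.preimage_mem_nhds hU
    have hgU : ∀ᶠ t' in 𝓝 t, g t' ∈ U := hgc.continuousAt.preimage_mem_nhds (ht ▸ hU)
    exact ODE_solution_unique_of_eventually (v := fun _ => F) (s := fun _ => U)
      (.of_forall fun _ => hK) (hfU.mono fun t' h => ⟨hf t', h⟩)
      (hgU.mono fun t' h => ⟨hg t', h⟩) ht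
  have hclopen : IsClopen {t | f t = g t} := ⟨isClosed_eq hfc hgc, hopen⟩
  funext t
  exact eq_univ_iff_forall.1 (hclopen.eq_univ ⟨t₀, heq⟩) t

theorem Continuous.exists_first_zero {g : ℝ → ℝ} (hg : Continuous g) {a b : ℝ}
    (hab : a ≤ b) (ha : 0 < g a) (hb : g b = 0) :
    ∃ s ∈ Ioc a b, g s = 0 ∧ ∀ x ∈ Ico a s, 0 < g x := by
  have hS : IsCompact (Icc a b ∩ g ⁻¹' {0}) :=
    isCompact_Icc.inter_right (isClosed_eq hg continuous_const)
  obtain ⟨s, ⟨hsI, hs0⟩, hleast⟩ := hS.exists_isLeast ⟨b, ⟨hab, le_rfl⟩, hb⟩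
  have hsa : a ≠ s := by rintro rfl; exact ha.ne' hs0
  refine ⟨s, ⟨lt_of_le_of_ne hsI.1 hsa, hsI.2⟩, hs0, fun x hx => ?_⟩
  by_contra! hx0
  obtain ⟨y, hy, hy0⟩ := intermediate_value_Icc' hx.1 hg.continuousOn ⟨hx0, ha.le⟩
  have := hleast ⟨⟨hy.1, hy.2.trans (hx.2.le.trans hsI.2)⟩, hy0⟩
  linarith [hy.2, hx.2]

theorem IsLocalMax.deriv_deriv_nonpos {f : ℝ → ℝ} {x : ℝ} (h : IsLocalMax f x)
    (hc : ContinuousAt f x) : deriv (deriv f) x ≤ 0 := by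
  by_contra! hpos
  have hmin := isLocalMin_of_deriv_deriv_pos hpos h.deriv_eq_zero hc
  have hloc : f =ᶠ[𝓝 x] fun _ => f x := (hmin.and h).mono fun y hy => le_antisymm hy.2 hy.1
  rw [hloc.deriv.deriv_eq] at hpos
  simp at hpos

theorem Function.Antiperiodic.deriv {f : ℝ → ℝ} {c : ℝ} (h : Antiperiodic f c) :
    Antiperiodic (deriv f) c := fun x => by
  rw [← deriv_comp_add_const, show (fun y => f (y + c)) = fun y => -f y from funext h,
    deriv.fun_neg]

theorem Function.Periodic.exists_nat_mul_eq {f : ℝ → ℝ} {p T c : ℝ} (hp : Periodic f p)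
    (hp0 : 0 < p) (hT : Periodic f T) (hT0 : 0 < T)
    (hc : ∀ x ∈ Ico c (c + p), f x = f c → x = c) : ∃ n : ℕ, 0 < n ∧ T = n * p := by
  set n := ⌊T / p⌋₊
  have hn : (n : ℝ) * p ≤ T := (le_div_iff₀ hp0).1 (Nat.floor_le (by positivity))
  have hn' : T < (n + 1) * p := (div_lt_iff₀ hp0).1 (Nat.lt_floor_add_one _)
  have hr : f (c + (T - n * p)) = f c := by
    rw [← (hp.nat_mul n) (c + (T - n * p)), show c + (T - n * p) + n * p = c + T by ring, hT]
  have hTn : T = n * p := by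
    linarith [hc _ ⟨by linarith, by linarith⟩ hr]
  refine ⟨n, Nat.pos_of_ne_zero fun h0 => ?_, hTn⟩
  rw [h0, Nat.cast_zero, zero_mul] at hTn
  exact hT0.ne' hTn

theorem hasDerivAt_const_mul_comp_affine {u : ℝ → ℝ} (hu : Differentiable ℝ u)
    (σ a b x : ℝ) :
    HasDerivAt (fun x => σ * u (a * x + b)) (σ * a * deriv u (a * x + b)) x := by
  have := ((hu _).hasDerivAt.comp x (((hasDerivAt_id x).const_mul a).add_const b)).const_mul σ
  simpa [mul_comm, mul_assoc, mul_left_comm] using this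

section HalfPeriod

variable {u : ℝ → ℝ} {s : ℝ}

theorem deriv_neg_of_antiperiodic (hanti : Antiperiodic u (2 * s))
    (hpos : ∀ x ∈ Ioo (-s) s, 0 < deriv u x) : ∀ x ∈ Ioo s (3 * s), deriv u x < 0 := by
  intro x hx
  have := hanti.deriv (x - 2 * s)
  rw [sub_add_cancel] at this
  linarith [hpos (x - 2 * s) ⟨by linarith [hx.1], by linarith [hx.2]⟩]

theorem strictAntiOn_of_antiperiodic (hc : Continuous u) (hanti : Antiperiodic u (2 * s))
    (hpos : ∀ x ∈ Ioo (-s) s, 0 < deriv u x) : StrictAntiOn u (Icc s (3 * s)) :=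
  strictAntiOn_of_deriv_neg (convex_Icc _ _) hc.continuousOn
    (by simpa using deriv_neg_of_antiperiodic hanti hpos)

theorem pos_of_antiperiodic (hc : Continuous u) (hanti : Antiperiodic u (2 * s))
    (hpos : ∀ x ∈ Ioo (-s) s, 0 < deriv u x) (hs : 0 < s) (h0 : u 0 = 0) :
    ∀ x ∈ Ioo 0 (2 * s), 0 < u x := by
  have hmono : StrictMonoOn u (Icc (-s) s) :=
    strictMonoOn_of_deriv_pos (convex_Icc _ _) hc.continuousOn (by simpa using hpos)
  intro x hx
  rcases le_total x s with hxs | hxs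
  · simpa [h0] using hmono ⟨by linarith, by linarith⟩
      ⟨by linarith [hx.1], hxs⟩ hx.1
  · have h2s : u (2 * s) = 0 := by simpa [h0] using hanti 0
    simpa [h2s] using strictAntiOn_of_antiperiodic hc hanti hpos ⟨hxs, by linarith [hx.2]⟩
      ⟨by linarith, by linarith⟩ hx.2

theorem exists_nat_mul_eq_of_antiperiodic (hc : Continuous u) (hanti : Antiperiodic u (2 * s))
    (hpos : ∀ x ∈ Ioo (-s) s, 0 < deriv u x) (hs : 0 < s) {T : ℝ} (hT : Periodic u T)
    (hT0 : 0 < T) : ∃ n : ℕ, 0 < n ∧ T = n * (4 * s) := by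
  have hper : Periodic u (4 * s) := by
    rw [show 4 * s = 2 * (2 * s) by ring]
    exact hanti.periodic_two_mul
  refine hper.exists_nat_mul_eq (by positivity) hT hT0 (c := s) fun x hx hxs => ?_
  by_contra hne
  rcases le_or_gt x (3 * s) with h | h
  · exact (strictAntiOn_of_antiperiodic hc hanti hpos ⟨le_rfl, by linarith⟩ ⟨hx.1, h⟩
      (lt_of_le_of_ne hx.1 (Ne.symm hne))).ne hxs
  · have hmono : StrictMonoOn u (Icc (-s) s) :=
      strictMonoOn_of_deriv_pos (convex_Icc _ _) hc.continuousOn (by simpa using hpos)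
    have := hmono ⟨by linarith, by linarith [hx.2]⟩ ⟨by linarith, le_rfl⟩
      (show x - 4 * s < s by linarith [hx.2])
    rw [← hper (x - 4 * s), sub_add_cancel] at this
    exact this.ne hxs

end HalfPeriod

/-- A stationary solution of the Allen–Cahn equation `u_t = κ² u_xx + u - u³`. -/
structure IsSteadyState (κ : ℝ) (u : ℝ → ℝ) : Prop where
  contDiff : ContDiff ℝ 2 u
  ode : ∀ x, κ ^ 2 * deriv (deriv u) x + u x - u x ^ 3 = 0

theorem isSteadyState_zero (κ : ℝ) : IsSteadyState κ 0 :=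
  ⟨contDiff_const, fun x => by simp⟩

namespace IsSteadyState

variable {κ : ℝ} {u v : ℝ → ℝ}

theorem differentiable (hu : IsSteadyState κ u) : Differentiable ℝ u :=
  hu.contDiff.differentiable (by norm_num)

theorem differentiable_deriv (hu : IsSteadyState κ u) : Differentiable ℝ (deriv u) :=
  (hu.contDiff.iterate_deriv' 1 1).differentiable (by norm_num)

theorem hasDerivAt_deriv (hu : IsSteadyState κ u) (hκ : κ ≠ 0) (x : ℝ) :
    HasDerivAt (deriv u) ((u x ^ 3 - u x) / κ ^ 2) x := by
  have h : deriv (deriv u) x = (u x ^ 3 - u x) / κ ^ 2 := by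
    rw [eq_div_iff (pow_ne_zero 2 hκ)]
    linear_combination hu.ode x
  exact h ▸ (hu.differentiable_deriv x).hasDerivAt

theorem comp_affine (hu : IsSteadyState κ u) {σ : ℝ} (hσ : σ ^ 3 = σ) (a b : ℝ) {κ' : ℝ}
    (hκ' : κ' ^ 2 * a ^ 2 = κ ^ 2) : IsSteadyState κ' (fun x => σ * u (a * x + b)) := by
  refine ⟨contDiff_const.mul (hu.contDiff.comp ((contDiff_const.mul contDiff_id).add
    contDiff_const)), fun x => ?_⟩
  have hd : deriv (fun x => σ * u (a * x + b)) = fun x => σ * a * deriv u (a * x + b) :=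
    funext fun x => (hasDerivAt_const_mul_comp_affine hu.differentiable σ a b x).deriv
  rw [hd, (hasDerivAt_const_mul_comp_affine hu.differentiable_deriv (σ * a) a b x).deriv]
  linear_combination σ * hu.ode (a * x + b) + σ * deriv (deriv u) (a * x + b) * hκ' -
    u (a * x + b) ^ 3 * hσ

theorem eq_of_eq_of_deriv_eq (hu : IsSteadyState κ u) (hv : IsSteadyState κ v) (hκ : κ ≠ 0)
    {x₀ : ℝ} (h₀ : u x₀ = v x₀) (h₁ : deriv u x₀ = deriv v x₀) : u = v := by
  let F : ℝ × ℝ → ℝ × ℝ := fun p => (p.2, (p.1 ^ 3 - p.1) / κ ^ 2)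
  have hF : LocallyLipschitz F := ContDiff.locallyLipschitz (𝕂 := ℝ) (by fun_prop)
  have hcurve : ∀ {w}, IsSteadyState κ w → ∀ t,
      HasDerivAt (fun t => (w t, deriv w t)) (F (w t, deriv w t)) t := fun hw t =>
    (hw.differentiable t).hasDerivAt.prodMk (hw.hasDerivAt_deriv hκ t)
  have := ODE_solution_unique_univ_of_locallyLipschitz hF (hcurve hu) (hcurve hv)
    (Prod.ext h₀ h₁)
  exact funext fun x => congrArg Prod.fst (congrFun this x)

theorem apply_two_mul_sub_of_deriv_eq_zero (hu : IsSteadyState κ u) (hκ : κ ≠ 0) {p : ℝ}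
    (hp : deriv u p = 0) (x : ℝ) : u (2 * p - x) = u x := by
  have hw := hu.comp_affine (σ := 1) (by norm_num) (-1) (2 * p) (κ' := κ) (by ring)
  have := hw.eq_of_eq_of_deriv_eq hu hκ (x₀ := p) (by ring_nf)
    (by
      rw [(hasDerivAt_const_mul_comp_affine hu.differentiable 1 (-1) (2 * p) p).deriv]
      ring_nf
      simp [hp])
  simpa [neg_one_mul, neg_add_eq_sub] using congrFun this x

theorem apply_two_mul_sub_of_eq_zero (hu : IsSteadyState κ u) (hκ : κ ≠ 0) {z : ℝ}
    (hz : u z = 0) (x : ℝ) : u (2 * z - x) = -u x := by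
  have hw := hu.comp_affine (σ := -1) (by norm_num) (-1) (2 * z) (κ' := κ) (by ring)
  have := hw.eq_of_eq_of_deriv_eq hu hκ (x₀ := z) (by ring_nf; simp [hz])
    (by
      rw [(hasDerivAt_const_mul_comp_affine hu.differentiable (-1) (-1) (2 * z) z).deriv]
      ring_nf)
  have := congrFun this x
  simp only [neg_one_mul, neg_add_eq_sub] at this
  linarith

theorem cube_le_of_isMaxOn (hu : IsSteadyState κ u) {x : ℝ} (hx : IsMaxOn u univ x) :
    u x ^ 3 ≤ u x := by
  have h := (hx.isLocalMax univ_mem).deriv_deriv_nonpos hu.contDiff.continuous.continuousAt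
  nlinarith [hu.ode x, sq_nonneg κ]

theorem le_cube_of_isMinOn (hu : IsSteadyState κ u) {x : ℝ} (hx : IsMinOn u univ x) :
    u x ≤ u x ^ 3 := by
  have hneg := hu.comp_affine (σ := -1) (by norm_num) 1 0 (κ' := κ) (by ring)
  have := hneg.cube_le_of_isMaxOn (x := x) fun y _ => by simpa using hx (mem_univ y)
  simp only [one_mul, add_zero] at this
  linarith

theorem exists_eq_zero (hu : IsSteadyState κ u) {T : ℝ} (hper : Periodic u T) (hT : T ≠ 0)
    (hnc : ¬ ∀ x, u x = u 0) : ∃ z, u z = 0 := by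
  have hc := hu.contDiff.continuous
  have hrange := hper.compact_of_continuous hT hc
  obtain ⟨_, ⟨xM, rfl⟩, hxM⟩ := hrange.exists_isGreatest (range_nonempty u)
  obtain ⟨_, ⟨xm, rfl⟩, hxm⟩ := hrange.exists_isLeast (range_nonempty u)
  have hM : ∀ x, u x ≤ u xM := fun x => hxM ⟨x, rfl⟩
  have hm : ∀ x, u xm ≤ u x := fun x => hxm ⟨x, rfl⟩
  have hlt : u xm < u xM := by
    by_contra! hle
    exact hnc fun x => by linarith [hM x, hm x, hM 0, hm 0]
  have hcubeM := hu.cube_le_of_isMaxOn (x := xM) fun x _ => hM x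
  have hcubem := hu.le_cube_of_isMinOn (x := xm) fun x _ => hm x
  have hsign : u xm ≤ 0 ∧ 0 ≤ u xM := by
    constructor <;> by_contra! h
    · have hm1 : 1 ≤ u xm := by nlinarith [sq_nonneg (u xm - 1), sq_nonneg (u xm)]
      have hM1 : u xM ≤ 1 := by nlinarith [sq_nonneg (u xM - 1), sq_nonneg (u xM)]
      linarith
    · have hM1 : u xM ≤ -1 := by nlinarith [sq_nonneg (u xM + 1), sq_nonneg (u xM)]
      have hm1 : -1 ≤ u xm := by nlinarith [sq_nonneg (u xm + 1), sq_nonneg (u xm)]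
      linarith
  exact intermediate_value_univ xm xM hc hsign

theorem pi_mul_lt_of_pos_between_zeros (hu : IsSteadyState κ u) (hκ : 0 < κ) {α β : ℝ}
    (hαβ : α < β) (hα : u α = 0) (hβ : u β = 0) (hβ' : deriv u β ≤ 0)
    (hpos : ∀ x ∈ Ioo α β, 0 < u x) : π * κ < β - α := by
  by_contra! hle
  let θ : ℝ → ℝ := fun x => (x - α) / κ
  -- the Wronskian of `u` and `sin θ`, a solution of the linear equation `κ² w'' + w = 0`
  let W : ℝ → ℝ := fun x => deriv u x * sin (θ x) - u x * (cos (θ x) / κ)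
  have hθ : ∀ x, HasDerivAt θ (1 / κ) x := fun x => by
    simpa using ((hasDerivAt_id x).sub_const α).div_const κ
  have hW : ∀ x, HasDerivAt W (sin (θ x) * u x ^ 3 / κ ^ 2) x := fun x => by
    have h := ((hu.hasDerivAt_deriv hκ.ne' x).mul ((hθ x).sin)).sub
      ((hu.differentiable x).hasDerivAt.mul ((hθ x).cos.div_const κ))
    refine h.congr_deriv ?_
    field_simp
    ring
  have hθ_mem : ∀ x ∈ Ioo α β, θ x ∈ Ioo 0 π := fun x hx =>
    ⟨div_pos (by linarith [hx.1]) hκ, (div_lt_iff₀ hκ).2 (by linarith [hx.2])⟩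
  have hmono : StrictMonoOn W (Icc α β) := by
    refine strictMonoOn_of_deriv_pos (convex_Icc α β)
      (HasDerivAt.continuousOn fun x _ => hW x) fun x hx => ?_
    rw [interior_Icc] at hx
    rw [(hW x).deriv]
    have := sin_pos_of_mem_Ioo (hθ_mem x hx)
    have := hpos x hx
    positivity
  have hWα : W α = 0 := by simp [W, θ, hα]
  have hWβ : W β ≤ 0 := by
    have : 0 ≤ sin (θ β) := sin_nonneg_of_nonneg_of_le_pi
      (div_nonneg (by linarith) hκ.le) ((div_le_iff₀ hκ).2 (by linarith))
    simp only [W, hβ, zero_mul, sub_zero]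
    exact mul_nonpos_of_nonpos_of_nonneg hβ' this
  linarith [hmono (left_mem_Icc.2 hαβ.le) (right_mem_Icc.2 hαβ.le) hαβ]

theorem exists_antiperiodic_of_eq_zero (hu : IsSteadyState κ u) (hκ : κ ≠ 0) {T : ℝ}
    (hper : Periodic u T) (hT : 0 < T) (h0 : u 0 = 0) (h0' : 0 < deriv u 0) :
    ∃ s > 0, Antiperiodic u (2 * s) ∧ ∀ x ∈ Ioo (-s) s, 0 < deriv u x := by
  have hodd : ∀ x, u (-x) = -u x := fun x => by
    simpa using hu.apply_two_mul_sub_of_eq_zero hκ h0 x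
  have hderiv_even : ∀ x, deriv u (-x) = deriv u x := fun x => by
    have h := deriv_comp_neg (f := u) (x := x)
    rw [show (fun x => u (-x)) = fun x => -u x from funext hodd, deriv.fun_neg] at h
    linarith
  obtain ⟨c, hc, hc0⟩ := exists_deriv_eq_zero hT hu.contDiff.continuous.continuousOn
    (by rw [← zero_add T, hper])
  obtain ⟨s, hs, hs0, hpos⟩ :=
    hu.differentiable_deriv.continuous.exists_first_zero hc.1.le h0' hc0
  refine ⟨s, hs.1, fun x => ?_, fun x hx => ?_⟩
  · calc u (x + 2 * s) = u (2 * s - -x) := by ring_nf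
      _ = -u x := by rw [hu.apply_two_mul_sub_of_deriv_eq_zero hκ hs0, hodd]
  · rcases le_total 0 x with h | h
    · exact hpos x ⟨h, hx.2⟩
    · rw [← hderiv_even]
      exact hpos (-x) ⟨by linarith, by linarith [hx.1]⟩

theorem isOddZeroUpGroundState_of_antiperiodic (hu : IsSteadyState κ u) (hκ : κ ≠ 0)
    (h0 : u 0 = 0) {s : ℝ} (hanti : Antiperiodic u (2 * s))
    (hpos : ∀ x ∈ Ioo (-s) s, 0 < deriv u x) {n : ℕ} (hn : 0 < n)
    (hπn : 2 * π = n * (4 * s)) : IsOddZeroUpGroundState (n * κ) (fun y => u (y / n)) := by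
  have hn' : (0 : ℝ) < n := Nat.cast_pos.2 hn
  have hs : 0 < s := by nlinarith [pi_pos]
  have hW := hu.comp_affine (σ := 1) (by norm_num) (n : ℝ)⁻¹ 0 (κ' := n * κ) (by field_simp)
  have hfun : (fun y => 1 * u ((n : ℝ)⁻¹ * y + 0)) = fun y => u (y / n) := by
    funext y
    rw [one_mul, add_zero, inv_mul_eq_div]
  rw [hfun] at hW
  have hderiv : ∀ y, deriv (fun y => u (y / n)) y = deriv u (y / n) / n := fun y => by
    have h := hasDerivAt_const_mul_comp_affine hu.differentiable 1 (n : ℝ)⁻¹ 0 y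
    rw [hfun] at h
    simp only [h.deriv, one_mul, add_zero, inv_mul_eq_div]
  refine ⟨hW.contDiff, fun y => ?_, fun y => ?_, hW.ode, fun y hy => ?_, fun y hy => ?_⟩
  · show u ((y + 2 * π) / n) = u (y / n)
    rw [show (y + 2 * π) / n = y / n + 2 * (2 * s) by field_simp; linarith]
    exact hanti.periodic_two_mul (y / n)
  · simpa [neg_div] using hu.apply_two_mul_sub_of_eq_zero hκ h0 (y / n)
  · rw [hderiv]
    refine div_pos (hpos _ ⟨by linarith [div_nonneg hy.1 hn'.le], ?_⟩) hn'
    exact (div_lt_iff₀ hn').2 (by linarith [hy.2])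
  · rw [hderiv]
    refine div_neg_of_neg_of_pos (deriv_neg_of_antiperiodic hanti hpos _ ⟨?_, ?_⟩) hn'
    · exact (lt_div_iff₀ hn').2 (by linarith [hy.1])
    · exact (div_lt_iff₀ hn').2 (by nlinarith [hy.2])

theorem exists_isOddZeroUpGroundState_of_eq_zero (hu : IsSteadyState κ u) (hκ : 0 < κ)
    (hper : Periodic u (2 * π)) (h0 : u 0 = 0) (h0' : 0 < deriv u 0) :
    ∃ n : ℕ, 0 < n ∧ n * κ < 1 ∧ IsOddZeroUpGroundState (n * κ) (fun y => u (y / n)) := by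
  have hc := hu.contDiff.continuous
  obtain ⟨s, hs, hanti, hpos⟩ :=
    hu.exists_antiperiodic_of_eq_zero hκ.ne' hper (by positivity) h0 h0'
  obtain ⟨n, hn, hπn⟩ :=
    exists_nat_mul_eq_of_antiperiodic hc hanti hpos hs hper (by positivity)
  have hsturm : π * κ < 2 * s := by
    have h2s := hanti 0
    have h2s' := hanti.deriv 0
    rw [zero_add] at h2s h2s'
    simpa using hu.pi_mul_lt_of_pos_between_zeros hκ (by positivity) h0 (by simp [h2s, h0])
      (by linarith [hpos 0 ⟨by linarith, hs⟩]) (pos_of_antiperiodic hc hanti hpos hs h0)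
  have hnκ : n * κ < 1 := by
    have hn' : (0 : ℝ) < n := Nat.cast_pos.2 hn
    refine lt_of_mul_lt_mul_left (a := π) ?_ pi_pos.le
    calc π * (n * κ) = n * (π * κ) := by ring
      _ < n * (2 * s) := by gcongr
      _ = π * 1 := by linarith
  exact ⟨n, hn, hnκ, hu.isOddZeroUpGroundState_of_antiperiodic hκ.ne' h0 hanti hpos hn hπn⟩

theorem exists_isOddZeroUpGroundState (hu : IsSteadyState κ u) (hκ : 0 < κ)
    (hper : Periodic u (2 * π)) (hnc : ¬ ∀ x, u x = u 0) :
    ∃ n : ℕ, 0 < n ∧ n * κ < 1 ∧ ∃ c σ : ℝ, (σ = 1 ∨ σ = -1) ∧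
      IsOddZeroUpGroundState (n * κ) (fun y => σ * u ((y - c) / n)) := by
  obtain ⟨z, hz⟩ := hu.exists_eq_zero hper (by positivity) hnc
  have hz' : deriv u z ≠ 0 := fun hz' => hnc fun x => by
    rw [hu.eq_of_eq_of_deriv_eq (isSteadyState_zero κ) hκ.ne' hz (by simpa using hz')]
    rfl
  obtain ⟨σ, hσ, hσz⟩ : ∃ σ : ℝ, (σ = 1 ∨ σ = -1) ∧ 0 < σ * deriv u z := by
    rcases hz'.lt_or_gt with h | h
    · exact ⟨-1, Or.inr rfl, by linarith⟩
    · exact ⟨1, Or.inl rfl, by linarith⟩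
  have hv := hu.comp_affine (σ := σ) (by rcases hσ with rfl | rfl <;> norm_num) 1 z
    (κ' := κ) (by ring)
  obtain ⟨n, hn, hnκ, hW⟩ := hv.exists_isOddZeroUpGroundState_of_eq_zero hκ
    (fun x => by simp only [one_mul]; rw [add_right_comm, hper])
    (by simp [hz])
    (by
      rw [(hasDerivAt_const_mul_comp_affine hu.differentiable σ 1 z 0).deriv]
      simpa using hσz)
  refine ⟨n, hn, hnκ, -(n * z), σ, hσ, ?_⟩
  convert hW using 1
  funext y
  field_simp
  ring_nf

theorem eq_one_or_eq_neg_one_or_eq_zero (hu : IsSteadyState κ u) (hconst : ∀ x, u x = u 0) :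
    (∀ x, u x = 1) ∨ (∀ x, u x = -1) ∨ (∀ x, u x = 0) := by
  have hroot : u 0 * ((1 - u 0) * (1 + u 0)) = 0 := by
    have h := hu.ode 0
    rw [show u = fun _ => u 0 from funext hconst] at h
    simp only [deriv_const', mul_zero, zero_add] at h
    linear_combination h
  rcases mul_eq_zero.1 hroot with h | h
  · exact Or.inr (Or.inr fun x => (hconst x).trans h)
  rcases mul_eq_zero.1 h with h | h
  · exact Or.inl fun x => by linarith [hconst x]
  · exact Or.inr (Or.inl fun x => by linarith [hconst x])

end IsSteadyState

theorem steady_state_classification_general (κ : ℝ) (hκ : 0 < κ)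
    (m : ℕ) (hml : 1 / ((m : ℝ) + 1) ≤ κ)
    (u : ℝ → ℝ) (hreg : ContDiff ℝ 2 u)
    (hper : Function.Periodic u (2 * π))
    (heq : ∀ x : ℝ, κ ^ 2 * deriv (deriv u) x + u x - u x ^ 3 = 0) :
    Xor' ((∀ x : ℝ, u x = 1) ∨ (∀ x : ℝ, u x = -1) ∨ (∀ x : ℝ, u x = 0))
      (∃ j : ℕ, 1 ≤ j ∧ j ≤ m ∧ ∃ c : ℝ, ∃ σ : ℝ, (σ = 1 ∨ σ = -1) ∧
        IsOddZeroUpGroundState ((j : ℝ) * κ) (fun y : ℝ => σ * u ((y - c) / (j : ℝ)))) := by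
  have hu : IsSteadyState κ u := ⟨hreg, heq⟩
  by_cases hconst : ∀ x, u x = u 0
  · refine Or.inl ⟨hu.eq_one_or_eq_neg_one_or_eq_zero hconst, ?_⟩
    rintro ⟨j, -, -, c, σ, -, hW⟩
    have h := hW.2.2.2.2.1 0 ⟨le_rfl, by positivity⟩
    simp [hconst] at h
  · refine Or.inr ⟨?_, fun hc => hconst ?_⟩
    · obtain ⟨n, hn, hnκ, hW⟩ := hu.exists_isOddZeroUpGroundState hκ hper hconst
      have hnm : (n : ℝ) < m + 1 := by
        rw [← div_lt_one (by positivity)]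
        calc (n : ℝ) / (m + 1) = n * (1 / (m + 1)) := by ring
          _ ≤ n * κ := by gcongr
          _ < 1 := hnκ
      exact ⟨n, hn, by exact_mod_cast Nat.lt_succ_iff.1 (by exact_mod_cast hnm), hW⟩
    · rcases hc with h | h | h <;> simp [h]

/-- classification of bounded periodic steady states for `κ ∈ (0,1)`:
exactly one of (1) `u ≡ ±1` or `u ≡ 0`, or (2) a rescaled/translated/reflected copy of
an odd zero-up ground state with parameter `jκ` for some `1 ≤ j ≤ m_κ`. -/
theorem steady_state_classification (κ : ℝ) (hκ : 0 < κ) (hκ1 : κ < 1)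
    (m : ℕ) (hm : 1 ≤ m) (hml : 1 / ((m : ℝ) + 1) ≤ κ) (hmr : κ < 1 / (m : ℝ))
    (u : ℝ → ℝ) (hreg : ContDiff ℝ 2 u) (hbdd : ∃ C : ℝ, ∀ x : ℝ, |u x| ≤ C)
    (hper : Function.Periodic u (2 * π))
    (heq : ∀ x : ℝ, κ ^ 2 * deriv (deriv u) x + u x - u x ^ 3 = 0) :
    Xor' ((∀ x : ℝ, u x = 1) ∨ (∀ x : ℝ, u x = -1) ∨ (∀ x : ℝ, u x = 0))
      (∃ j : ℕ, 1 ≤ j ∧ j ≤ m ∧ ∃ c : ℝ, ∃ σ : ℝ, (σ = 1 ∨ σ = -1) ∧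
        IsOddZeroUpGroundState ((j : ℝ) * κ) (fun y : ℝ => σ * u ((y - c) / (j : ℝ)))) :=
  steady_state_classification_general κ hκ m hml u hreg hper heq
end
end

section
/- Let κ ≥ 1 and let u : ℝ → ℝ be a bounded, twice continuously differentiable, 2π-periodic solution of κ² u'' + u − u³ = 0 on ℝ. Then u ≡ 0, u ≡ 1, or u ≡ −1. -/
open Real MeasureTheory Set

noncomputable section

/-!
Testing the equation against `u''` and integrating by parts over a period gives
`κ² ∫ u''² = ∫ u'² - 3 ∫ (u u')²`, while Wirtinger's inequality for the mean-zero periodic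
function `u'` gives `∫ u'² ≤ ∫ u''²`. For `κ ≥ 1` this forces `∫ (u u')² = 0`, so `(u²)' = 0`
and `u` is constant; the constant solutions are the roots `0, ±1` of `u - u³`.
-/

open Complex intervalIntegral

theorem Function.Periodic.deriv {𝕜 F : Type*} [NontriviallyNormedField 𝕜] [NormedAddCommGroup F]
    [NormedSpace 𝕜 F] {f : 𝕜 → F} {c : 𝕜} (h : Function.Periodic f c) :
    Function.Periodic (deriv f) c := fun x => by
  rw [← deriv_comp_add_const, show (fun y => f (y + c)) = f from funext h]

theorem ContinuousOn.memLp_restrict_Ioc {E : Type*} [NormedAddCommGroup E] {a b : ℝ}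
    {f : ℝ → E} (hf : ContinuousOn f (Icc a b)) :
    MemLp f 2 (volume.restrict (Ioc a b)) := by
  obtain ⟨C, hC⟩ := isCompact_Icc.exists_bound_of_continuousOn hf
  exact .of_bound ((hf.mono Ioc_subset_Icc_self).aestronglyMeasurable measurableSet_Ioc) C
    (ae_restrict_of_forall_mem measurableSet_Ioc fun x hx => hC x (Ioc_subset_Icc_self hx))

theorem norm_fourierCoeffOn_sq_le_of_hasDerivAt {a b : ℝ} (hab : a < b) {f f' : ℝ → ℂ}
    (hf : ContinuousOn f (Icc a b)) (hff' : ∀ x ∈ Ioo a b, HasDerivAt f (f' x) x)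
    (hf' : IntervalIntegrable f' volume a b) (hfab : f a = f b)
    (hmean : ∫ x in a..b, f x = 0) (n : ℤ) :
    ‖fourierCoeffOn hab f n‖ ^ 2 ≤ ((b - a) / (2 * π)) ^ 2 * ‖fourierCoeffOn hab f' n‖ ^ 2 := by
  rcases eq_or_ne n 0 with rfl | hn
  · have h0 : fourierCoeffOn hab f 0 = 0 := by simp [fourierCoeffOn_eq_integral, hmean]
    rw [h0, norm_zero, zero_pow two_ne_zero]
    positivity
  have hn1 : (1 : ℝ) ≤ |(n : ℝ)| := by exact_mod_cast Int.one_le_abs hn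
  rw [fourierCoeffOn_of_hasDerivAt_Ioo hab hn (by rwa [uIcc_of_le hab.le])
    (by simpa [hab.le] using hff') hf', hfab, sub_self, mul_zero, zero_sub]
  have hnorm : ‖1 / (-2 * π * I * n) * -((b - a : ℂ) * fourierCoeffOn hab f' n)‖
      = (b - a) / (2 * π) / |(n : ℝ)| * ‖fourierCoeffOn hab f' n‖ := by
    simp only [norm_mul, norm_div, norm_neg, norm_one, ← ofReal_sub, norm_real, norm_intCast,
      Complex.norm_ofNat, norm_I, Real.norm_of_nonneg (sub_pos.2 hab).le,
      Real.norm_of_nonneg pi_pos.le]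
    field_simp
  rw [hnorm, mul_pow]
  gcongr ?_ ^ 2 * _
  exact div_le_self (by positivity) hn1

/-- Wirtinger's inequality, via Parseval's identity. -/
theorem integral_norm_sq_le_of_hasDerivAt_of_integral_eq_zero {a b : ℝ} (hab : a < b)
    {f f' : ℝ → ℂ} (hf : ContinuousOn f (Icc a b)) (hff' : ∀ x ∈ Ioo a b, HasDerivAt f (f' x) x)
    (hf' : MemLp f' 2 (volume.restrict (Ioc a b))) (hfab : f a = f b)
    (hmean : ∫ x in a..b, f x = 0) :
    ∫ x in a..b, ‖f x‖ ^ 2 ≤ ((b - a) / (2 * π)) ^ 2 * ∫ x in a..b, ‖f' x‖ ^ 2 := by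
  have hf'i : IntervalIntegrable f' volume a b :=
    (intervalIntegrable_iff_integrableOn_Ioc_of_le hab.le).2 (hf'.integrable one_le_two)
  have hparseval :=
    hasSum_le (norm_fourierCoeffOn_sq_le_of_hasDerivAt hab hf hff' hf'i hfab hmean)
      (hasSum_sq_fourierCoeffOn hab hf.memLp_restrict_Ioc)
      ((hasSum_sq_fourierCoeffOn hab hf').mul_left _)
  rw [smul_eq_mul, smul_eq_mul, mul_left_comm] at hparseval
  exact le_of_mul_le_mul_left hparseval (inv_pos.2 (sub_pos.2 hab))

theorem integral_sq_le_of_hasDerivAt_of_integral_eq_zero {a b : ℝ} (hab : a < b)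
    {f f' : ℝ → ℝ} (hf : ContinuousOn f (Icc a b)) (hff' : ∀ x ∈ Ioo a b, HasDerivAt f (f' x) x)
    (hf' : MemLp f' 2 (volume.restrict (Ioc a b))) (hfab : f a = f b)
    (hmean : ∫ x in a..b, f x = 0) :
    ∫ x in a..b, f x ^ 2 ≤ ((b - a) / (2 * π)) ^ 2 * ∫ x in a..b, f' x ^ 2 := by
  have h := integral_norm_sq_le_of_hasDerivAt_of_integral_eq_zero hab
    (f := fun x => (f x : ℂ)) (continuous_ofReal.comp_continuousOn hf)
    (fun x hx => (hff' x hx).ofReal_comp) hf'.ofReal (by rw [hfab])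
    (by rw [integral_ofReal, hmean, ofReal_zero])
  simpa only [norm_real, Real.norm_eq_abs, sq_abs] using h

theorem integral_comp_mul_deriv_deriv {W u : ℝ → ℝ} {a b : ℝ} (hW : ContDiff ℝ 1 W)
    (hu : ContDiff ℝ 2 u) (hua : u a = u b) (hu'a : deriv u a = deriv u b) :
    ∫ x in a..b, W (u x) * deriv (deriv u) x = -∫ x in a..b, deriv W (u x) * deriv u x ^ 2 := by
  have hu' : ContDiff ℝ 1 (deriv u) := (show ContDiff ℝ (1 + 1) u from hu).deriv'
  have hWu : ∀ x, HasDerivAt (fun y => W (u y)) (deriv W (u x) * deriv u x) x := fun x =>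
    (hW.differentiable one_ne_zero (u x)).hasDerivAt.comp x
      (hu.differentiable two_ne_zero x).hasDerivAt
  have hcont : Continuous fun x => deriv W (u x) * deriv u x :=
    (hW.continuous_deriv le_rfl).comp hu.continuous |>.mul hu'.continuous
  rw [integral_mul_deriv_eq_deriv_mul (fun x _ => hWu x)
    (fun x _ => (hu'.differentiable one_ne_zero x).hasDerivAt) (hcont.intervalIntegrable _ _)
    (hu'.continuous_deriv le_rfl |>.intervalIntegrable _ _), hua, hu'a, sub_self, zero_sub]
  simp only [mul_assoc, ← sq]

theorem eq_of_sq_eq_sq_of_continuous {X : Type*} [TopologicalSpace X] [PreconnectedSpace X]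
    {f : X → ℝ} (hf : Continuous f) (hsq : ∀ x y, f x ^ 2 = f y ^ 2) (x y : X) : f x = f y := by
  by_contra hne
  have hneg : f x = -f y := (sq_eq_sq_iff_eq_or_eq_neg.1 (hsq x y)).resolve_left hne
  obtain ⟨z, hz⟩ : (0 : ℝ) ∈ range f := by
    rcases le_total (f x) (f y) with h | h
    · exact intermediate_value_univ x y hf ⟨by linarith, by linarith⟩
    · exact intermediate_value_univ y x hf ⟨by linarith, by linarith⟩
  have hy : f y = 0 := by simpa [hz] using (hsq z y).symm
  exact hne (by rw [hneg, hy, neg_zero])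

theorem eq_of_mul_deriv_eq_zero {u : ℝ → ℝ} (hu : Differentiable ℝ u)
    (h : ∀ x, u x * deriv u x = 0) (x y : ℝ) : u x = u y := by
  refine eq_of_sq_eq_sq_of_continuous hu.continuous (fun x y => ?_) x y
  refine is_const_of_deriv_eq_zero (f := fun y => u y ^ 2) (hu.pow 2) (fun z => ?_) x y
  simpa [deriv_fun_pow (hu z)] using h z

theorem Function.Periodic.eq_zero_of_integral_sq_eq_zero {f : ℝ → ℝ} {c : ℝ} (hc : 0 < c)
    (hf : Continuous f) (hper : Function.Periodic f c) (h : ∫ x in 0..c, f x ^ 2 = 0) (x : ℝ) :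
    f x = 0 := by
  obtain ⟨y, hy, hxy⟩ := hper.exists_mem_Ioc hc x 0
  rw [zero_add] at hy
  rw [hxy]
  have hae := (integral_eq_zero_iff_of_le_of_nonneg_ae hc.le
    (Filter.Eventually.of_forall fun x => sq_nonneg (f x))
    ((hf.pow 2).intervalIntegrable _ _)).1 h
  exact (pow_eq_zero_iff two_ne_zero).1
    (Measure.eqOn_Ioc_of_ae_eq volume hae (hf.pow 2).continuousOn continuousOn_const hy)

section SteadyState

variable {κ : ℝ} {u : ℝ → ℝ}

theorem integral_deriv_sq_le_integral_deriv_deriv_sq (hu : ContDiff ℝ 2 u)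
    (hper : Function.Periodic u (2 * π)) :
    ∫ x in 0..2 * π, deriv u x ^ 2 ≤ ∫ x in 0..2 * π, deriv (deriv u) x ^ 2 := by
  have hu' : ContDiff ℝ 1 (deriv u) := (show ContDiff ℝ (1 + 1) u from hu).deriv'
  have h := integral_sq_le_of_hasDerivAt_of_integral_eq_zero two_pi_pos
    hu'.continuous.continuousOn (fun x _ => (hu'.differentiable one_ne_zero x).hasDerivAt)
    (hu'.continuous_deriv le_rfl).continuousOn.memLp_restrict_Ioc
    (by simpa using (hper.deriv 0).symm)
    (by rw [integral_deriv_eq_sub (fun x _ => hu.differentiable two_ne_zero x)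
      (hu'.continuous.intervalIntegrable _ _), sub_eq_zero, ← zero_add (2 * π), hper])
  rwa [sub_zero, div_self two_pi_pos.ne', one_pow, one_mul] at h

theorem integral_sq_mul_deriv_sq_eq_zero (hκ : 1 ≤ κ) (hu : ContDiff ℝ 2 u)
    (hper : Function.Periodic u (2 * π))
    (heq : ∀ x, κ ^ 2 * deriv (deriv u) x + u x - u x ^ 3 = 0) :
    ∫ x in 0..2 * π, (u x * deriv u x) ^ 2 = 0 := by
  have hu' : ContDiff ℝ 1 (deriv u) := (show ContDiff ℝ (1 + 1) u from hu).deriv'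
  have hu0 := hu.continuous
  have hu1 := hu'.continuous
  have hu2 := hu'.continuous_deriv le_rfl
  have hIBP := integral_comp_mul_deriv_deriv (W := fun y => y ^ 3 - y) (by fun_prop) hu
    (by simpa using (hper 0).symm) (by simpa using (hper.deriv 0).symm)
  have hL : ∫ x in 0..2 * π, (u x ^ 3 - u x) * deriv (deriv u) x
      = κ ^ 2 * ∫ x in 0..2 * π, deriv (deriv u) x ^ 2 := by
    rw [← intervalIntegral.integral_const_mul]
    refine integral_congr fun x _ => ?_
    rw [show u x ^ 3 - u x = κ ^ 2 * deriv (deriv u) x by linarith [heq x]]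
    ring
  have hW' : ∀ y : ℝ, deriv (fun y => y ^ 3 - y) y = 3 * y ^ 2 - 1 := fun y => by simp
  have hR : ∫ x in 0..2 * π, deriv (fun y => y ^ 3 - y) (u x) * deriv u x ^ 2
      = 3 * (∫ x in 0..2 * π, (u x * deriv u x) ^ 2) - ∫ x in 0..2 * π, deriv u x ^ 2 := by
    rw [← intervalIntegral.integral_const_mul, ← intervalIntegral.integral_sub
      ((by fun_prop : Continuous _).intervalIntegrable _ _)
      ((by fun_prop : Continuous _).intervalIntegrable _ _)]
    refine integral_congr fun x _ => ?_
    rw [hW']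
    ring
  have hwirtinger := integral_deriv_sq_le_integral_deriv_deriv_sq hu hper
  have hJ : 0 ≤ ∫ x in 0..2 * π, (u x * deriv u x) ^ 2 :=
    integral_nonneg two_pi_pos.le fun x _ => sq_nonneg _
  have hκI : ∫ x in 0..2 * π, deriv (deriv u) x ^ 2
      ≤ κ ^ 2 * ∫ x in 0..2 * π, deriv (deriv u) x ^ 2 :=
    le_mul_of_one_le_left (integral_nonneg two_pi_pos.le fun x _ => sq_nonneg _) (one_le_pow₀ hκ)
  linarith

end SteadyState

theorem steady_state_trivial_kappa_ge_one_general (κ : ℝ) (hκ : 1 ≤ κ)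
    (u : ℝ → ℝ) (hreg : ContDiff ℝ 2 u)
    (hper : Function.Periodic u (2 * π))
    (heq : ∀ x : ℝ, κ ^ 2 * deriv (deriv u) x + u x - u x ^ 3 = 0) :
    (∀ x : ℝ, u x = 0) ∨ (∀ x : ℝ, u x = 1) ∨ (∀ x : ℝ, u x = -1) := by
  have hmul : ∀ x, u x * deriv u x = 0 :=
    (hper.mul hper.deriv).eq_zero_of_integral_sq_eq_zero two_pi_pos
      (hreg.continuous.mul (hreg.continuous_deriv (by norm_num)))
      (integral_sq_mul_deriv_sq_eq_zero hκ hreg hper heq)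
  have hconst : ∀ x, u x = u 0 := fun x =>
    eq_of_mul_deriv_eq_zero (hreg.differentiable two_ne_zero) hmul x 0
  have hroot : u 0 * (u 0 - 1) * (u 0 + 1) = 0 := by
    have hu'' : deriv (deriv u) 0 = 0 := by rw [funext hconst]; simp
    linear_combination -(heq 0) + κ ^ 2 * hu''
  rcases mul_eq_zero.1 hroot with h | h
  · rcases mul_eq_zero.1 h with h | h
    · exact Or.inl fun x => (hconst x).trans h
    · exact Or.inr <| Or.inl fun x => (hconst x).trans (by linarith)
  · exact Or.inr <| Or.inr fun x => (hconst x).trans (by linarith)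

/-- for `κ ≥ 1`, every bounded `C²` `2π`-periodic steady state is
`0`, `1` or `−1`. -/
theorem steady_state_trivial_kappa_ge_one (κ : ℝ) (hκ : 1 ≤ κ)
    (u : ℝ → ℝ) (hreg : ContDiff ℝ 2 u) (hbdd : ∃ C : ℝ, ∀ x : ℝ, |u x| ≤ C)
    (hper : Function.Periodic u (2 * π))
    (heq : ∀ x : ℝ, κ ^ 2 * deriv (deriv u) x + u x - u x ^ 3 = 0) :
    (∀ x : ℝ, u x = 0) ∨ (∀ x : ℝ, u x = 1) ∨ (∀ x : ℝ, u x = -1) :=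
  steady_state_trivial_kappa_ge_one_general κ hκ u hreg hper heq
end
end
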